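/- arXiv:2109.11691 — 2 statements merged into one kernel-verified Lean document; each statement's English description precedes it below -/
import Mathlib

section
/- For each prime p in the list {5, 7, 11, 13, 17, 19, 23, 29, 31, 41, 43, 61, 67, 71, 73, 79, 113, 181, 199, 337, 397, 571, 1093, 1381}, there is no residue a modulo p such that a, a+1, a+2, and a+3 are all primitive roots modulo p; that is, the prime field F_p contains no four consecutive primitive elements. -/
def checkP (p : ℕ) (exps : List ℕ) : Bool :=
  (List.range p).all fun a =>
    (List.range 4).any fun i =>
      ((a + i) % p == 0) || exps.any fun e => (a + i) ^ e % p == 1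

lemma bridge (p : ℕ) (hp : p.Prime) (hp5 : 5 ≤ p) (exps : List ℕ)
    (hexps : ∀ e ∈ exps, 0 < e ∧ e < p - 1)
    (h : checkP p exps = true) :
    ¬ ∃ a : ZMod p, ∀ i : ℕ, i < 4 → orderOf (a + (i : ZMod p)) = p - 1 := by
  rintro ⟨a, ha⟩
  haveI : Fact p.Prime := ⟨hp⟩
  haveI : NeZero p := ⟨hp.ne_zero⟩
  simp only [checkP, List.all_eq_true, List.any_eq_true, List.mem_range,
    Bool.or_eq_true, beq_iff_eq] at h
  obtain ⟨i, hi4, hcond⟩ := h a.val (ZMod.val_lt a)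
  have key : a + (i : ZMod p) = ((a.val + i : ℕ) : ZMod p) := by
    push_cast [ZMod.natCast_val, ZMod.cast_id]
    rfl
  rcases hcond with h0 | ⟨e, he, hpow⟩
  · -- a + i = 0 in ZMod p
    have hz : a + (i : ZMod p) = 0 := by
      rw [key]
      exact (ZMod.natCast_eq_zero_iff _ _).mpr (Nat.dvd_of_mod_eq_zero h0)
    have h1 : (a + (i : ZMod p)) ^ (p - 1) = 1 := ha i hi4 ▸ pow_orderOf_eq_one _
    rw [hz, zero_pow (by omega)] at h1
    exact zero_ne_one h1
  · -- (a+i)^e = 1 in ZMod p with 0 < e < p - 1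
    have hpow' : (a + (i : ZMod p)) ^ e = 1 := by
      rw [key, ← Nat.cast_pow, ← ZMod.natCast_mod, hpow, Nat.cast_one]
    have hdvd := orderOf_dvd_of_pow_eq_one hpow'
    rw [ha i hi4] at hdvd
    obtain ⟨h1, h2⟩ := hexps e he
    exact absurd (Nat.le_of_dvd h1 hdvd) (not_le.mpr h2)

set_option maxRecDepth 100000 in
set_option maxHeartbeats 4000000 in
set_option exponentiation.threshold 2000 in
/-- For each prime `p` in the given list, there are no four consecutive
primitive roots modulo `p`. -/
theorem no_four_consecutive_primitive_roots_exceptional_primes :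
    ∀ p ∈ [5, 7, 11, 13, 17, 19, 23, 29, 31, 41, 43, 61, 67, 71, 73, 79, 113,
        181, 199, 337, 397, 571, 1093, 1381],
      ¬ ∃ a : ZMod p, ∀ i : ℕ, i < 4 → orderOf (a + (i : ZMod p)) = p - 1 := by
  intro p hp
  fin_cases hp
  · exact bridge 5 (by norm_num) (by norm_num) [2] (by decide) (by decide)
  · exact bridge 7 (by norm_num) (by norm_num) [3, 2] (by decide) (by decide)
  · exact bridge 11 (by norm_num) (by norm_num) [5, 2] (by decide) (by decide)
  · exact bridge 13 (by norm_num) (by norm_num) [6, 4] (by decide) (by decide)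
  · exact bridge 17 (by norm_num) (by norm_num) [8] (by decide) (by decide)
  · exact bridge 19 (by norm_num) (by norm_num) [9, 6] (by decide) (by decide)
  · exact bridge 23 (by norm_num) (by norm_num) [11, 2] (by decide) (by decide)
  · exact bridge 29 (by norm_num) (by norm_num) [14, 4] (by decide) (by decide)
  · exact bridge 31 (by norm_num) (by norm_num) [15, 10, 6] (by decide) (by decide)
  · exact bridge 41 (by norm_num) (by norm_num) [20, 8] (by decide) (by decide)
  · exact bridge 43 (by norm_num) (by norm_num) [21, 14, 6] (by decide) (by decide)
  · exact bridge 61 (by norm_num) (by norm_num) [30, 20, 12] (by decide) (by decide)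
  · exact bridge 67 (by norm_num) (by norm_num) [33, 22, 6] (by decide) (by decide)
  · exact bridge 71 (by norm_num) (by norm_num) [35, 14, 10] (by decide) (by decide)
  · exact bridge 73 (by norm_num) (by norm_num) [36, 24] (by decide) (by decide)
  · exact bridge 79 (by norm_num) (by norm_num) [39, 26, 6] (by decide) (by decide)
  · exact bridge 113 (by norm_num) (by norm_num) [56, 16] (by decide) (by decide)
  · exact bridge 181 (by norm_num) (by norm_num) [90, 60, 36] (by decide) (by decide)
  · exact bridge 199 (by norm_num) (by norm_num) [99, 66, 18] (by decide) (by decide)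
  · exact bridge 337 (by norm_num) (by norm_num) [168, 112, 48] (by decide) (by decide)
  · exact bridge 397 (by norm_num) (by norm_num) [198, 132, 36] (by decide) (by decide)
  · exact bridge 571 (by norm_num) (by norm_num) [285, 190, 114, 30] (by decide) (by decide)
  · exact bridge 1093 (by norm_num) (by norm_num) [546, 364, 156, 84] (by decide) (by decide)
  · exact bridge 1381 (by norm_num) (by norm_num) [690, 460, 276, 60] (by decide) (by decide)
end

section
/- In the field F_49 = F_7[X]/(X² + 6X + 3), the residue classes of X + 5, X + 6, and X are three consecutive primitive elements; that is, each of X + 5, X + 6, and X has multiplicative order 48, where X + 6 + 1 = X in characteristic 7. -/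
open Polynomial

set_option maxHeartbeats 1000000

private lemma order48 {R : Type*} [Monoid R] (x : R) (h48 : x ^ 48 = 1)
    (h24 : x ^ 24 ≠ 1) (h16 : x ^ 16 ≠ 1) : orderOf x = 48 := by
  apply orderOf_eq_of_pow_and_pow_div_prime (by norm_num) h48
  intro q hq hdvd
  have h2 := hq.two_le
  have h48' := Nat.le_of_dvd (by norm_num) hdvd
  interval_cases q <;>
    first
      | exact absurd hq (by decide)
      | exact absurd hdvd (by decide)
      | (show x ^ (48/2) ≠ 1; norm_num; exact h24)
      | (show x ^ (48/3) ≠ 1; norm_num; exact h16)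

/-- In `F₄₉ = F₇[X]/(X² + 6X + 3)`, the classes of `X + 5`, `X + 6` and `X` are three
consecutive primitive elements: each has multiplicative order 48, and `(X + 6) + 1 = X`
in characteristic 7. -/
theorem three_consecutive_primitive_elements_F49' :
    orderOf (AdjoinRoot.root (X ^ 2 + 6 * X + 3 : (ZMod 7)[X]) + 5) = 48 ∧
    orderOf (AdjoinRoot.root (X ^ 2 + 6 * X + 3 : (ZMod 7)[X]) + 6) = 48 ∧
    orderOf (AdjoinRoot.root (X ^ 2 + 6 * X + 3 : (ZMod 7)[X])) = 48 ∧
    (AdjoinRoot.root (X ^ 2 + 6 * X + 3 : (ZMod 7)[X]) + 6) + 1 =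
      AdjoinRoot.root (X ^ 2 + 6 * X + 3 : (ZMod 7)[X]) := by
  set F : (ZMod 7)[X] := X ^ 2 + 6 * X + 3 with hF
  have hdeg : F.degree = 2 := by rw [hF]; compute_degree!
  haveI : Fact (Nat.Prime 7) := ⟨by norm_num⟩
  have hnt : Nontrivial (AdjoinRoot F) := AdjoinRoot.nontrivial F (by rw [hdeg]; decide)
  have h : (AdjoinRoot.root F) ^ 2 + 6 * (AdjoinRoot.root F) + 3 = 0 := by
    have h0 := AdjoinRoot.eval₂_root F
    rw [hF] at h0 ⊢
    simpa [eval₂_add, eval₂_mul, eval₂_pow, eval₂_X, map_ofNat] using h0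
  have h7 : (7 : AdjoinRoot F) = 0 := by
    have e1 : (AdjoinRoot.of F) 7 = (7 : AdjoinRoot F) := map_ofNat _ 7
    rw [← e1, show (7 : ZMod 7) = 0 from rfl, map_zero]
  obtain ⟨r, hrdef⟩ : ∃ y, y = AdjoinRoot.root F := ⟨_, rfl⟩
  rw [← hrdef]
  have hr : r ^ 2 = r + 4 := by
    linear_combination h + (r + AdjoinRoot.root F + 6) * hrdef - r * h7 - h7
  obtain ⟨s, hsdef⟩ : ∃ y, y = r + 5 := ⟨_, rfl⟩
  obtain ⟨t, htdef⟩ : ∃ y, y = r + 6 := ⟨_, rfl⟩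
  rw [← hsdef, ← htdef]
  have hs2 : s ^ 2 = 4 * s + 2 := by
    linear_combination (s + r + 1) * hsdef + hr + (r + 1) * h7
  have ht2 : t ^ 2 = 6 * t - 3 := by
    linear_combination (t + r) * htdef + hr + (r + 1) * h7
  have hr48 : r^48 = 1 := by linear_combination ((2) + (3)*r + (5)*r^2 + (3)*r^3 + (4)*r^4 + (5)*r^5 + (5)*r^6 + (3)*r^8 + (1)*r^9 + (4)*r^10 + (1)*r^11 + (6)*r^12 + (4)*r^13 + (4)*r^14 + (1)*r^16 + (5)*r^17 + (6)*r^18 + (5)*r^19 + (2)*r^20 + (6)*r^21 + (6)*r^22 + (5)*r^24 + (4)*r^25 + (2)*r^26 + (4)*r^27 + (3)*r^28 + (2)*r^29 + (2)*r^30 + (4)*r^32 + (6)*r^33 + (3)*r^34 + (6)*r^35 + (1)*r^36 + (3)*r^37 + (3)*r^38 + (6)*r^40 + (2)*r^41 + (1)*r^42 + (2)*r^43 + (5)*r^44 + (1)*r^45 + (1)*r^46) * hr + ((1) + (2)*r + (3)*r^2 + (2)*r^3 + (2)*r^4 + (3)*r^5 + (3)*r^6 + (1)*r^8 + (1)*r^9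 + (2)*r^10 + (1)*r^11 + (3)*r^12 + (3)*r^13 + (2)*r^14 + (3)*r^17 + (4)*r^18 + (3)*r^19 + (1)*r^20 + (3)*r^21 + (4)*r^22 + (2)*r^24 + (3)*r^25 + (1)*r^26 + (2)*r^27 + (2)*r^28 + (1)*r^29 + (1)*r^30 + (2)*r^32 + (4)*r^33 + (2)*r^34 + (3)*r^35 + (1)*r^36 + (1)*r^37 + (2)*r^38 + (3)*r^40 + (2)*r^41 + (1)*r^43 + (3)*r^44 + (1)*r^45) * h7
  have hr24 : r^24 = 6 := by linear_combination ((5) + (4)*r + (2)*r^2 + (4)*r^3 + (3)*r^4 + (2)*r^5 + (2)*r^6 + (4)*r^8 + (6)*r^9 + (3)*r^10 + (6)*r^11 + (1)*r^12 + (3)*r^13 + (3)*r^14 + (6)*r^16 + (2)*r^17 + (1)*r^18 + (2)*r^19 + (5)*r^20 + (1)*r^21 + (1)*r^22) * hr + ((2) + (3)*r + (1)*r^2 + (2)*r^3 + (2)*r^4 + (1)*r^5 + (1)*r^6 + (2)*r^8 + (4)*r^9 + (2)*r^10 + (3)*r^11 + (1)*r^12 + (1)*r^13 + (2)*r^14 +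 (3)*r^16 + (2)*r^17 + (1)*r^19 + (3)*r^20 + (1)*r^21) * h7
  have hr16 : r^16 = 2 := by linear_combination ((4) + (6)*r + (3)*r^2 + (6)*r^3 + (1)*r^4 + (3)*r^5 + (3)*r^6 + (6)*r^8 + (2)*r^9 + (1)*r^10 + (2)*r^11 + (5)*r^12 + (1)*r^13 + (1)*r^14) * hr + ((2) + (4)*r + (2)*r^2 + (3)*r^3 + (1)*r^4 + (1)*r^5 + (2)*r^6 + (3)*r^8 + (2)*r^9 + (1)*r^11 + (3)*r^12 + (1)*r^13) * h7
  have hs48 : s^48 = 1 := by linear_combination ((4) + (6)*s + (4)*s^2 + (2)*s^3 + (5)*s^4 + (5)*s^5 + (3)*s^6 + (5)*s^8 + (4)*s^9 + (5)*s^10 + (6)*s^11 + (1)*s^12 + (1)*s^13 + (2)*s^14 + (1)*s^16 + (5)*s^17 + (1)*s^18 + (4)*s^19 + (3)*s^20 + (3)*s^21 + (6)*s^22 + (3)*s^24 + (1)*s^25 + (3)*s^26 + (5)*s^27 + (2)*s^28 + (2)*s^29 + (4)*s^30 + (2)*s^32 + (3)*s^33 + (2)*s^34 + (1)*s^35 +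 (6)*s^36 + (6)*s^37 + (5)*s^38 + (6)*s^40 + (2)*s^41 + (6)*s^42 + (3)*s^43 + (4)*s^44 + (4)*s^45 + (1)*s^46) * hs2 + ((1) + (4)*s + (4)*s^2 + (2)*s^3 + (2)*s^4 + (4)*s^5 + (3)*s^6 + (1)*s^7 + (1)*s^8 + (4)*s^9 + (3)*s^10 + (4)*s^11 + (3)*s^12 + (1)*s^14 + (1)*s^15 + (2)*s^17 + (3)*s^18 + (1)*s^19 + (3)*s^20 + (2)*s^21 + (3)*s^22 + (3)*s^23 + (2)*s^25 + (1)*s^26 + (3)*s^27 + (3)*s^28 + (1)*s^29 + (2)*s^30 + (2)*s^31 + (2)*s^33 + (2)*s^34 + (1)*s^35 + (2)*s^36 + (5)*s^37 + (4)*s^38 + (2)*s^39 + (1)*s^40 + (4)*s^41 + (2)*s^42 + (4)*s^43 + (2)*s^44 + (3)*s^45 + (2)*s^46) * h7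
  have hs24 : s^24 = 6 := by linear_combination ((3) + (1)*s + (3)*s^2 + (5)*s^3 + (2)*s^4 + (2)*s^5 + (4)*s^6 + (2)*s^8 + (3)*s^9 + (2)*s^10 + (1)*s^11 + (6)*s^12 + (6)*s^13 + (5)*s^14 + (6)*s^16 + (2)*s^17 + (6)*s^18 + (3)*s^19 + (4)*s^20 + (4)*s^21 + (1)*s^22) * hs2 + ((2)*s + (1)*s^2 + (3)*s^3 + (3)*s^4 + (1)*s^5 + (2)*s^6 + (2)*s^7 + (2)*s^9 + (2)*s^10 + (1)*s^11 + (2)*s^12 + (5)*s^13 + (4)*s^14 + (2)*s^15 + (1)*s^16 + (4)*s^17 + (2)*s^18 + (4)*s^19 + (2)*s^20 + (3)*s^21 + (2)*s^22) * h7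
  have hs16 : s^16 = 4 := by linear_combination ((2) + (3)*s + (2)*s^2 + (1)*s^3 + (6)*s^4 + (6)*s^5 + (5)*s^6 + (6)*s^8 + (2)*s^9 + (6)*s^10 + (3)*s^11 + (4)*s^12 + (4)*s^13 + (1)*s^14) * hs2 + ((2)*s + (2)*s^2 + (1)*s^3 + (2)*s^4 + (5)*s^5 + (4)*s^6 + (2)*s^7 + (1)*s^8 + (4)*s^9 + (2)*s^10 + (4)*s^11 + (2)*s^12 + (3)*s^13 + (2)*s^14) * h7
  have ht48 : t^48 = 1 := by linear_combination ((2) + (4)*t + (5)*t^2 + (4)*t^3 + (4)*t^4 + (2)*t^5 + (5)*t^6 + (3)*t^8 + (6)*t^9 + (4)*t^10 + (6)*t^11 + (6)*t^12 + (3)*t^13 + (4)*t^14 + (1)*t^16 + (2)*t^17 + (6)*t^18 + (2)*t^19 + (2)*t^20 + (1)*t^21 + (6)*t^22 + (5)*t^24 + (3)*t^25 + (2)*t^26 + (3)*t^27 + (3)*t^28 + (5)*t^29 + (2)*t^30 + (4)*t^32 + (1)*t^33 + (3)*t^34 + (1)*t^35 + (1)*t^36 + (4)*t^37 + (3)*t^38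 + (6)*t^40 + (5)*t^41 + (1)*t^42 + (5)*t^43 + (5)*t^44 + (6)*t^45 + (1)*t^46) * ht2 + ((-1) + (1)*t^2 + (2)*t^3 + (1)*t^4 + (2)*t^5 + (-1)*t^6 + (4)*t^7 + (-2)*t^8 + (3)*t^10 + (2)*t^12 + (3)*t^13 + (3)*t^15 + (-1)*t^16 + (-1)*t^18 + (4)*t^19 + (1)*t^21 + (-2)*t^22 + (5)*t^23 + (-3)*t^24 + (3)*t^25 + (1)*t^26 + (1)*t^28 + (3)*t^30 + (1)*t^31 + (-2)*t^32 + (3)*t^33 + (-1)*t^34 + (2)*t^35 + (-1)*t^37 + (2)*t^38 + (2)*t^39 + (-3)*t^40 + (3)*t^41 + (3)*t^42 + (-2)*t^43 + (2)*t^44 + (1)*t^45 + (4)*t^46) * h7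
  have ht24 : t^24 = 6 := by linear_combination ((5) + (3)*t + (2)*t^2 + (3)*t^3 + (3)*t^4 + (5)*t^5 + (2)*t^6 + (4)*t^8 + (1)*t^9 + (3)*t^10 + (1)*t^11 + (1)*t^12 + (4)*t^13 + (3)*t^14 + (6)*t^16 + (5)*t^17 + (1)*t^18 + (5)*t^19 + (5)*t^20 + (6)*t^21 + (1)*t^22) * ht2 + ((-3) + (3)*t + (1)*t^2 + (1)*t^4 + (3)*t^6 + (1)*t^7 + (-2)*t^8 + (3)*t^9 + (-1)*t^10 + (2)*t^11 + (-1)*t^13 + (2)*t^14 + (2)*t^15 + (-3)*t^16 + (3)*t^17 + (3)*t^18 + (-2)*t^19 + (2)*t^20 + (1)*t^21 + (4)*t^22) * h7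
  have ht16 : t^16 = 2 := by linear_combination ((4) + (1)*t + (3)*t^2 + (1)*t^3 + (1)*t^4 + (4)*t^5 + (3)*t^6 + (6)*t^8 + (5)*t^9 + (1)*t^10 + (5)*t^11 + (5)*t^12 + (6)*t^13 + (1)*t^14) * ht2 + ((-2) + (3)*t + (-1)*t^2 + (2)*t^3 + (-1)*t^5 + (2)*t^6 + (2)*t^7 + (-3)*t^8 + (3)*t^9 + (3)*t^10 + (-2)*t^11 + (2)*t^12 + (1)*t^13 + (4)*t^14) * h7
  refine ⟨?_, ?_, ?_, ?_⟩
  · exact order48 _ hs48 (fun e => one_ne_zero (α := AdjoinRoot F) (by rw [hs24] at e; linear_combination 3 * e - 2 * h7))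
      (fun e => one_ne_zero (α := AdjoinRoot F) (by rw [hs16] at e; linear_combination 5 * e - 2 * h7))
  · exact order48 _ ht48 (fun e => one_ne_zero (α := AdjoinRoot F) (by rw [ht24] at e; linear_combination 3 * e - 2 * h7))
      (fun e => one_ne_zero (α := AdjoinRoot F) (by rw [ht16] at e; linear_combination e))
  · exact order48 _ hr48 (fun e => one_ne_zero (α := AdjoinRoot F) (by rw [hr24] at e; linear_combination 3 * e - 2 * h7))
      (fun e => one_ne_zero (α := AdjoinRoot F) (by rw [hr16] at e; linear_combination e))
  · linear_combination htdef + h7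
end
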